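/- arXiv:2403.10525 — 2 statements merged into one kernel-verified Lean document; each statement's English description precedes it below -/
import Mathlib

section
/- Let R be a ring and suppose there is a short exact sequence 0 → M → W → M → 0 of R-modules with W injective. If M has finite injective dimension, then M is injective. -/
/-!
For a projective resolution `P` of `Z`, applying `Hom(P, -)` to `0 → M → W → M → 0` gives a short
exact sequence of Hom complexes, and `Hom(P, W)` is acyclic in positive degrees because `W` is
injective. The connecting maps therefore embed `Extⁱ(Z, M)` into `Extⁱ⁺¹(Z, M)` for `i ≥ 1`, so
finite injective dimension forces `Extⁱ(Z, M) = 0` for all `i ≥ 1`. Finally `Ext¹(M, M) = 0`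
makes `W → M` split, so `M` is a retract of the injective module `W`.
-/

open CategoryTheory Opposite

/-- The `i`-th Ext group (as a `ℤ`-module) in the category of `R`-modules. -/
noncomputable def extGroup (R : Type) [Ring R] (i : ℕ) (Z M : ModuleCat.{0} R) :
    ModuleCat ℤ :=
  ((Ext ℤ (ModuleCat.{0} R) i).obj (op Z)).obj M

/-- `M` has injective dimension at most `n`: `Ext^i(Z, M) = 0` for all `i > n`
and all modules `Z`. -/
def injDimLE (R : Type) [Ring R] (M : ModuleCat.{0} R) (n : ℕ) : Prop :=
  ∀ (Z : ModuleCat.{0} R) (i : ℕ), n < i → Limits.IsZero (extGroup R i Z M)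

open Limits

section

variable {C : Type*} [Category* C] [Abelian C] (k : Type*) [Ring k] [Linear k C]

lemma CategoryTheory.ShortComplex.ShortExact.map_linearCoyoneda_obj {S : ShortComplex C}
    (hS : S.ShortExact) (P : C) [Projective P] :
    (S.map ((linearCoyoneda k C).obj (Opposite.op P))).ShortExact := by
  have := hS.mono_f
  have := hS.epi_g
  refine ShortComplex.ShortExact.mk' ?_ ?_ ?_
  · rw [ShortComplex.moduleCat_exact_iff]
    intro β hβ
    exact hS.exact.lift' β hβ
  · rw [ModuleCat.mono_iff_injective]
    intro a b h
    exact (cancel_mono S.f).1 h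
  · rw [ModuleCat.epi_iff_surjective]
    intro β
    exact ⟨Projective.factorThru β S.g, Projective.factorThru_comp β S.g⟩

namespace ChainComplex

lemma linearYonedaObj_exactAt_succ_iff (X : ChainComplex C ℕ) (Y : C) (n : ℕ) :
    (X.linearYonedaObj k Y).ExactAt (n + 1) ↔
      ∀ α : X.X (n + 1) ⟶ Y, X.d (n + 2) (n + 1) ≫ α = 0 →
        ∃ β : X.X n ⟶ Y, X.d (n + 1) n ≫ β = α := by
  rw [HomologicalComplex.exactAt_iff' _ n (n + 1) (n + 2) (by simp) (by simp),
    ShortComplex.moduleCat_exact_iff]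
  rfl

lemma exactAt_linearYonedaObj_of_injective {X : ChainComplex C ℕ} {n : ℕ}
    (hX : X.ExactAt (n + 1)) (I : C) [Injective I] :
    (X.linearYonedaObj k I).ExactAt (n + 1) := by
  rw [linearYonedaObj_exactAt_succ_iff]
  intro α hα
  have hX' := (X.exactAt_iff' (n + 2) (n + 1) n (by simp) (by simp)).1 hX
  exact ⟨hX'.descToInjective α hα, hX'.comp_descToInjective α hα⟩

noncomputable def linearYonedaObjMap (X : ChainComplex C ℕ) {Y Y' : C} (φ : Y ⟶ Y') :
    X.linearYonedaObj k Y ⟶ X.linearYonedaObj k Y' where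
  f i := ((linearCoyoneda k C).obj (op (X.X i))).map φ
  comm' i j _ := by
    ext α
    exact (Category.assoc (X.d j i) (show X.X i ⟶ Y from α) φ).symm

noncomputable def linearYonedaObjShortComplex (X : ChainComplex C ℕ) (S : ShortComplex C) :
    ShortComplex (CochainComplex (ModuleCat k) ℕ) :=
  ShortComplex.mk (X.linearYonedaObjMap k S.f) (X.linearYonedaObjMap k S.g) (by
    ext i α
    exact (Category.assoc (show X.X i ⟶ S.X₁ from α) S.f S.g).trans
      (by rw [S.zero]; exact comp_zero))

lemma shortExact_linearYonedaObjShortComplex (X : ChainComplex C ℕ) [∀ i, Projective (X.X i)]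
    {S : ShortComplex C} (hS : S.ShortExact) :
    (X.linearYonedaObjShortComplex k S).ShortExact :=
  HomologicalComplex.shortExact_of_degreewise_shortExact _ fun i =>
    hS.map_linearCoyoneda_obj k (X.X i)

end ChainComplex

variable [EnoughProjectives C]

lemma isZero_ext_succ_of_isZero_ext_succ_succ {S : ShortComplex C} (hS : S.ShortExact)
    [Injective S.X₂] (Z : C) (n : ℕ)
    (h : IsZero (((Ext k C (n + 2)).obj (op Z)).obj S.X₁)) :
    IsZero (((Ext k C (n + 1)).obj (op Z)).obj S.X₃) := by
  let P := ProjectiveResolution.of Z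
  have hP := P.complex.shortExact_linearYonedaObjShortComplex k hS
  have h₂ : IsZero ((P.complex.linearYonedaObj k S.X₂).homology (n + 1)) := by
    rw [← HomologicalComplex.exactAt_iff_isZero_homology]
    exact P.complex.exactAt_linearYonedaObj_of_injective k (P.complex_exactAt_succ n) S.X₂
  have := hP.mono_δ (n + 1) (n + 2) (by simp) h₂
  exact (IsZero.of_mono (hP.δ (n + 1) (n + 2) _)
    (h.of_iso (P.isoExt (n + 2) S.X₁).symm)).of_iso (P.isoExt (n + 1) S.X₃)

/- The exactness of `Hom(Z, S.X₂) ⟶ Hom(Z, S.X₃) ⟶ Ext¹(Z, S.X₁)`, checked by hand on a projective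
resolution of `Z`: lift `φ` to `ε` on `P₀`, correct `ε` by a cochain `β` killing the obstruction
cocycle `α`, and descend the result along `P₀ ⟶ Z`. -/
lemma exists_lift_of_isZero_ext_one {S : ShortComplex C} (hS : S.ShortExact) {Z : C}
    (h : IsZero (((Ext k C 1).obj (op Z)).obj S.X₁)) (φ : Z ⟶ S.X₃) :
    ∃ ψ : Z ⟶ S.X₂, ψ ≫ S.g = φ := by
  let P := ProjectiveResolution.of Z
  have hP : (P.complex.linearYonedaObj k S.X₁).ExactAt (0 + 1) :=
    (HomologicalComplex.exactAt_iff_isZero_homology _ _).2 (h.of_iso (P.isoExt 1 S.X₁).symm)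
  have := hS.mono_f
  have := hS.epi_g
  obtain ⟨ε, hε⟩ : ∃ ε, ε ≫ S.g = P.π.f 0 ≫ φ :=
    ⟨Projective.factorThru _ _, Projective.factorThru_comp _ _⟩
  obtain ⟨α, hα⟩ := hS.exact.lift' (P.complex.d 1 0 ≫ ε) (by
    rw [Category.assoc, hε]; exact (P.complex_d_comp_π_f_zero_assoc φ).trans zero_comp)
  obtain ⟨β, hβ⟩ := (P.complex.linearYonedaObj_exactAt_succ_iff k S.X₁ 0).1 hP α (by
    rw [← cancel_mono S.f, Category.assoc, hα, P.complex.d_comp_d_assoc, zero_comp, zero_comp])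
  refine ⟨P.exact₀.desc (ε - β ≫ S.f) ?_, (cancel_epi (P.π.f 0)).1 ?_⟩
  · rw [Preadditive.comp_sub, reassoc_of% hβ, hα, sub_self]
  · refine (P.exact₀.g_desc_assoc _ _ _).trans ?_
    rw [Preadditive.sub_comp, hε, Category.assoc, S.zero, comp_zero, sub_zero]

lemma CategoryTheory.ShortComplex.ShortExact.injective_X₃_of_isZero_ext_one
    {S : ShortComplex C} (hS : S.ShortExact) [Injective S.X₂]
    (h : IsZero (((Ext k C 1).obj (Opposite.op S.X₃)).obj S.X₁)) : Injective S.X₃ := by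
  obtain ⟨s, hs⟩ := exists_lift_of_isZero_ext_one k hS h (𝟙 S.X₃)
  exact Retract.injective ⟨s, S.g, hs⟩

lemma isZero_ext_succ_of_shortExact_self {M W : C} {f : M ⟶ W} {g : W ⟶ M} {w : f ≫ g = 0}
    (hS : (ShortComplex.mk f g w).ShortExact) [Injective W] {Z : C} {n : ℕ}
    (hn : ∀ i, n < i → IsZero (((Ext k C i).obj (op Z)).obj M)) (i : ℕ) :
    IsZero (((Ext k C (i + 1)).obj (op Z)).obj M) := by
  suffices ∀ j i, n < i + 1 + j → IsZero (((Ext k C (i + 1)).obj (op Z)).obj M) from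
    this n i (by omega)
  intro j
  induction j with
  | zero => exact fun i hi => hn (i + 1) hi
  | succ j ih =>
    exact fun i hi => isZero_ext_succ_of_isZero_ext_succ_succ k hS Z i (ih (i + 1) (by omega))

theorem injective_of_shortExact_self {M W : C} {f : M ⟶ W} {g : W ⟶ M} {w : f ≫ g = 0}
    (hS : (ShortComplex.mk f g w).ShortExact) [Injective W] {n : ℕ}
    (hn : ∀ Z i, n < i → IsZero (((Ext k C i).obj (op Z)).obj M)) : Injective M :=
  hS.injective_X₃_of_isZero_ext_one k (isZero_ext_succ_of_shortExact_self k hS (hn M) 0)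

end

/-- If `0 → M → W → M → 0` is a short exact sequence of `R`-modules with `W` injective,
and `M` has finite injective dimension, then `M` is injective. -/
theorem stmt2 (R : Type) [Ring R]
    (M W : Type) [AddCommGroup M] [Module R M] [AddCommGroup W] [Module R W]
    (f : M →ₗ[R] W) (g : W →ₗ[R] M)
    (hf : Function.Injective f) (hg : Function.Surjective g)
    (hfg : Function.Exact f g)
    (hW : Module.Injective R W)
    (hfin : ∃ n : ℕ, injDimLE R (ModuleCat.of R M) n) :
    Module.Injective R M := by
  obtain ⟨n, hn⟩ := hfin
  have hS := ModuleCat.shortComplex_shortExact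
    (ModuleCat.shortComplexOfCompEqZero f g hfg.linearMap_comp_eq_zero) hfg hf hg
  have := Module.injective_object_of_injective_module R W
  rw [Module.injective_iff_injective_object]
  exact injective_of_shortExact_self ℤ hS hn
end

section
/- Let R be a ring and let P_• be an exact (acyclic) unbounded complex of projective R-modules such that Hom(P_•, N) is exact for every R-module N. Then every cycle module Z_m(P_•) is projective, and each short exact sequence 0 → Z_m(P_•) → P_m → Z_{m-1}(P_•) → 0 splits. -/
/-!
The corestriction `P_{m+1} → Z_m` of the differential is surjective by exactness and kills the
image of `P_{m+2}`, so `Hom(P_•, Z_m)`-exactness extends it along `d : P_{m+1} → P_m`. The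
extension is a retraction of `Z_m ↪ P_m`, so `Z_m` is a direct summand of a projective module.
-/

open LinearMap

namespace Function.Exact

variable {R : Type*} [Ring R] {L M N Q : Type*}
  [AddCommGroup L] [AddCommGroup M] [AddCommGroup N] [AddCommGroup Q]
  [Module R L] [Module R M] [Module R N] [Module R Q]
  {f : M →ₗ[R] N} {g : N →ₗ[R] Q}

lemma surjective_codRestrict_ker (hfg : Exact f g) :
    Surjective (f.codRestrict (ker g) fun x => mem_ker.mpr (hfg.apply_apply_eq_zero x)) :=
  fun z =>
  let ⟨y, hy⟩ := (hfg z).mp z.2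
  ⟨y, Subtype.ext hy⟩

theorem exists_retraction_subtype_ker (hfg : Exact f g) {e : L →ₗ[R] M} (hef : f ∘ₗ e = 0)
    (hhom : Exact (fun u : N →ₗ[R] ker g => u ∘ₗ f) (fun u : M →ₗ[R] ker g => u ∘ₗ e)) :
    ∃ r : N →ₗ[R] ker g, r ∘ₗ (ker g).subtype = LinearMap.id := by
  set f' := f.codRestrict (ker g) fun x => mem_ker.mpr (hfg.apply_apply_eq_zero x)
  have hf'e : f' ∘ₗ e = 0 := by
    ext x
    exact congr($hef x)
  obtain ⟨r, hr⟩ := (hhom f').mp hf'e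
  refine ⟨r, (cancel_right hfg.surjective_codRestrict_ker).mp ?_⟩
  rw [LinearMap.comp_assoc, subtype_comp_codRestrict, LinearMap.id_comp]
  exact hr

end Function.Exact

/-- Let `P` be an exact unbounded complex of projective `R`-modules
(`d i : P i → P (i-1)`), such that `Hom(P_•, N)` is exact for every `R`-module `N`.
Then every cycle module `Z_m = ker (d m)` is projective, and each short exact sequence
`0 → Z_m → P_m → Z_{m-1} → 0` splits. -/
theorem stmt8 (R : Type) [Ring R]
    (P : ℤ → Type) [∀ i, AddCommGroup (P i)] [∀ i, Module R (P i)]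
    (hproj : ∀ i, Module.Projective R (P i))
    (d : ∀ i : ℤ, P i →ₗ[R] P (i - 1))
    (hexact : ∀ i : ℤ, Function.Exact (d i) (d (i - 1)))
    (hhom : ∀ (N : Type) (_ : AddCommGroup N) (_ : Module R N) (i : ℤ),
      Function.Exact
        (fun g : P (i - 1 - 1) →ₗ[R] N => g ∘ₗ d (i - 1))
        (fun g : P (i - 1) →ₗ[R] N => g ∘ₗ d i)) :
    ∀ m : ℤ,
      Module.Projective R (LinearMap.ker (d m)) ∧
      ∃ r : P m →ₗ[R] LinearMap.ker (d m),
        ∀ x : LinearMap.ker (d m), r (x : P m) = x := by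
  intro m
  obtain ⟨i, rfl⟩ : ∃ i : ℤ, m = i - 1 - 1 := ⟨m + 2, by ring⟩
  obtain ⟨r, hr⟩ := (hexact (i - 1)).exists_retraction_subtype_ker
    (hexact i).linearMap_comp_eq_zero (hhom _ _ _ i)
  exact ⟨.of_split _ r hr, r, LinearMap.congr_fun hr⟩
end
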